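/- arXiv:2304.11420 — 3 statements merged into one kernel-verified Lean document; each statement's English description precedes it below -/
import Mathlib

section
/- Let P(u)^3 denote the cubic polynomial function obtained from the intersection theory: for u in [0,1], P(u) = 2Q̂ + Ê + (4-u)G and for u in [1,4], P(u) = ((7-u)/3)Q̂ + Ê + (4-u)G, computed using the intersection numbers Q̂^3 = -6, Q̂^2·Ê = -6, Q̂·Ê^2 = 18, Ê^3 = -30, Q̂^2·G = 4, Q̂·G^2 = -2, G^3 = 1, G^2·Ê = G·Ê^2 = Q̂·Ê·G = 0. Then (1/22) ∫_0^4 P(u)^3 du = S with A/S = 11/10 where A = 3, i.e. ∫_0^4 P(u)^3 du = 60. -/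
/-!
On `[0, 1]` the integrand is `22 - u ^ 3`, on `[1, 4]` it is `(208 - 12 u - 6 u ^ 2 - u ^ 3) / 9`;
the two cubics integrate to `87/4` and `153/4`, so the total is `60` and `3 / (60 / 22) = 11/10`.
-/

open MeasureTheory intervalIntegral

/-- Cube of a·Q̂ + b·Ê + c·G expanded with the listed intersection numbers. -/
def cubeQEG (a b c : ℝ) : ℝ :=
  a^3*(-6) + 3*a^2*b*(-6) + 3*a*b^2*18 + b^3*(-30)
    + 3*a^2*c*4 + 3*a*c^2*(-2) + c^3*1
    + 3*b^2*c*0 + 3*b*c^2*0 + 6*a*b*c*0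

open Set Interval

theorem intervalIntegral.integral_ite_le {f g : ℝ → ℝ} {a b c : ℝ} (hac : a ≤ c) (hcb : c ≤ b)
    (hf : IntervalIntegrable f volume a c) (hg : IntervalIntegrable g volume c b) :
    ∫ u in a..b, (if u ≤ c then f u else g u) = (∫ u in a..c, f u) + ∫ u in c..b, g u := by
  have hf' : EqOn (fun u ↦ if u ≤ c then f u else g u) f (Ι a c) := fun u hu ↦ by
    rw [uIoc_of_le hac] at hu
    exact if_pos hu.2
  have hg' : EqOn (fun u ↦ if u ≤ c then f u else g u) g (Ι c b) := fun u hu ↦ by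
    rw [uIoc_of_le hcb] at hu
    exact if_neg (not_le.2 hu.1)
  rw [← integral_add_adjacent_intervals ((intervalIntegrable_congr hf').2 hf)
      ((intervalIntegrable_congr hg').2 hg), integral_congr_ae (ae_of_all _ hf'),
    integral_congr_ae (ae_of_all _ hg')]

lemma cubeQEG_two_one (u : ℝ) : cubeQEG 2 1 (4 - u) = 22 - u ^ 3 := by
  unfold cubeQEG; ring

lemma cubeQEG_seven_sub_div_three_one (u : ℝ) :
    cubeQEG ((7 - u) / 3) 1 (4 - u) = 208 / 9 - 4 / 3 * u - 2 / 3 * u ^ 2 - 1 / 9 * u ^ 3 := by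
  unfold cubeQEG; ring

lemma integral_cubeQEG_piecewise :
    (∫ u in (0:ℝ)..4,
        (if u ≤ 1 then cubeQEG 2 1 (4-u) else cubeQEG ((7-u)/3) 1 (4-u))) = 60 := by
  simp only [cubeQEG_two_one, cubeQEG_seven_sub_div_three_one]
  rw [integral_ite_le zero_le_one (by norm_num) (Continuous.intervalIntegrable (by fun_prop) _ _)
    (Continuous.intervalIntegrable (by fun_prop) _ _)]
  simp (disch := exact Continuous.intervalIntegrable (by fun_prop) _ _) only
    [intervalIntegral.integral_sub, intervalIntegral.integral_const_mul, integral_pow,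
      intervalIntegral.integral_const]
  rw [intervalIntegral.integral_const_mul, integral_id]
  norm_num

theorem stmt_5 :
    (∫ u in (0:ℝ)..4,
        (if u ≤ 1 then cubeQEG 2 1 (4-u) else cubeQEG ((7-u)/3) 1 (4-u))) = 60 ∧
    (3 : ℝ) / ((1/22) * ∫ u in (0:ℝ)..4,
        (if u ≤ 1 then cubeQEG 2 1 (4-u) else cubeQEG ((7-u)/3) 1 (4-u))) = 11/10 := by
  refine ⟨integral_cubeQEG_piecewise, ?_⟩
  rw [integral_cubeQEG_piecewise]
  norm_num
end

section
/- Define f(u,v) = (u-v)^2 on {u∈[0,2], v∈[0,u]} and f(u,v) = ((6-u)/2 - v)^2 on {u∈[2,4], v∈[0,(6-u)/2]}. Then (3/22) ∫∫ f dv du = 23/44. -/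
open MeasureTheory intervalIntegral

theorem stmt_16 :
    (3/22 : ℝ) *
      ((∫ u in (0:ℝ)..2, ∫ v in (0:ℝ)..u, (u-v)^2) +
       (∫ u in (2:ℝ)..4, ∫ v in (0:ℝ)..((6-u)/2), ((6-u)/2 - v)^2))
    = 23/44 := by
  have inner : ∀ a : ℝ, (∫ v in (0:ℝ)..a, (a - v)^2) = a^3/3 := by
    intro a
    have := intervalIntegral.integral_comp_sub_left (a := (0:ℝ)) (b := a)
      (fun x => x^2) a
    simp only [sub_self, sub_zero] at this
    rw [this, integral_pow]
    norm_num
  have h1 : (∫ u in (0:ℝ)..2, ∫ v in (0:ℝ)..u, (u-v)^2) = 4/3 := by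
    simp only [inner]
    rw [show (fun u : ℝ => u^3/3) = (fun u : ℝ => (1/3 : ℝ) * u^3) by
      funext u; ring]
    rw [intervalIntegral.integral_const_mul, integral_pow]
    norm_num
  have h2 : (∫ u in (2:ℝ)..4, ∫ v in (0:ℝ)..((6-u)/2), ((6-u)/2 - v)^2) = 5/2 := by
    simp only [inner]
    rw [show (fun u : ℝ => ((6-u)/2)^3/3) = (fun u : ℝ => (1/24 : ℝ) * (6-u)^3) by
      funext u; ring]
    rw [intervalIntegral.integral_const_mul]
    have := intervalIntegral.integral_comp_sub_left (a := (2:ℝ)) (b := 4)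
      (fun x => x^3) 6
    rw [this, integral_pow]
    norm_num
  rw [h1, h2]
  norm_num
end

section
/- With f as in the Eckardt case (f(u,v) = u-v on {u∈[0,2], v∈[0,u]}, f(u,v) = (6-u)/2 - v on {u∈[2,4], v∈[0,(6-u)/2]}), we have (3/22) ∫∫ f^2 dv du + (6/22) ∫_2^4 ∫_0^{(6-u)/2} f(u,v)·((u-2)/2) dv du = 17/22. -/
open MeasureTheory intervalIntegral

/-!
The inner integrals are elementary, `∫_0^c (c - v)^n dv = c^(n+1)/(n+1)`. On `[2, 4]` the outer
integrals become polynomial integrals over `[1, 2]` after substituting the slice height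
`t = (6 - u)/2`, under which `(u - 2)/2 = 2 - t`. The three pieces are `4/3`, `5/2` and `11/12`.
-/

theorem integral_sub_pow (c : ℝ) (n : ℕ) :
    ∫ v in (0:ℝ)..c, (c - v) ^ n = c ^ (n + 1) / (n + 1) := by
  simp [integral_comp_sub_left fun x => x ^ n, integral_pow]

theorem integral_comp_three_sub_half (g : ℝ → ℝ) :
    ∫ u in (2:ℝ)..4, g ((6 - u) / 2) = 2 * ∫ t in (1:ℝ)..2, g t := by
  simp only [sub_div, show (6:ℝ) / 2 = 3 by norm_num]
  rw [integral_comp_sub_div g (two_ne_zero' ℝ)]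
  norm_num

theorem stmt_17 :
    (3/22 : ℝ) *
      ((∫ u in (0:ℝ)..2, ∫ v in (0:ℝ)..u, (u-v)^2) +
       (∫ u in (2:ℝ)..4, ∫ v in (0:ℝ)..((6-u)/2), ((6-u)/2 - v)^2)) +
    (6/22 : ℝ) *
      (∫ u in (2:ℝ)..4, ∫ v in (0:ℝ)..((6-u)/2), ((6-u)/2 - v) * ((u-2)/2))
    = 17/22 := by
  have hA : ∫ u in (0:ℝ)..2, ∫ v in (0:ℝ)..u, (u - v) ^ 2 = 4 / 3 := by
    norm_num [integral_sub_pow, intervalIntegral.integral_div, integral_pow]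
  have hB : ∫ u in (2:ℝ)..4, ∫ v in (0:ℝ)..((6 - u) / 2), ((6 - u) / 2 - v) ^ 2 = 5 / 2 := by
    simp only [integral_sub_pow]
    rw [integral_comp_three_sub_half fun t => t ^ (2 + 1) / ((2:ℕ) + 1)]
    norm_num [intervalIntegral.integral_div, integral_pow]
  have hC : ∫ u in (2:ℝ)..4, ∫ v in (0:ℝ)..((6 - u) / 2),
      ((6 - u) / 2 - v) * ((u - 2) / 2) = 11 / 12 := by
    have hlin (c : ℝ) : ∫ v in (0:ℝ)..c, (c - v) = c ^ 2 / 2 := by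
      simpa [one_add_one_eq_two] using integral_sub_pow c 1
    have hheight (u : ℝ) : (u - 2) / 2 = 2 - (6 - u) / 2 := by ring
    have hexpand (t : ℝ) : t ^ 2 / 2 * (2 - t) = t ^ 2 - t ^ 3 / 2 := by ring
    simp only [hheight, intervalIntegral.integral_mul_const, hlin]
    rw [integral_comp_three_sub_half fun t => t ^ 2 / 2 * (2 - t)]
    norm_num [hexpand, intervalIntegral.integral_sub, intervalIntegral.integral_div, integral_pow]
  rw [hA, hB, hC]
  norm_num
end
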